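/- arXiv:0708.2866 — 2 statements merged into one kernel-verified Lean document; each statement's English description precedes it below -/
import Mathlib

section
/- Let T be a triangulated category, S a full triangulated subcategory closed under arbitrary direct sums (a localizing subcategory), and X an object of T. Suppose L0 ∈ S and a morphism f : L0 → X are given such that for every object R in a class 𝓡 of objects of S, composition with f induces an isomorphism Hom(R, L0) → Hom(R, X). If S is the smallest localizing subcategory containing 𝓡, then for every object S' ∈ S, composition with f induces an isomorphism Hom(S', L0) → Hom(S', X). -/
/-!
The objects `A` for which `u ↦ u ≫ f` is a bijection `Hom(A, L0) → Hom(A, X)` are closed under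
isomorphisms and direct sums, and the four lemma on the long exact `Hom(-, L0)` and `Hom(-, X)`
sequences of a distinguished triangle shows that the third vertex is in the class as soon as the
first two and their shifts are. Hence the objects all of whose shifts are in the class form a
localizing class; it contains the shift-closed class `𝓡`, hence all of `S` by minimality.
-/

open CategoryTheory Category Limits Pretriangulated

universe w v u

/-- A localizing class of objects in a triangulated category with arbitrary direct sums:
a (strictly full) class closed under isomorphisms, shifts, triangles and
arbitrary direct sums. -/
def IsLocalizingClass (T : Type u) [Category.{v} T] [Preadditive T] [HasZeroObject T]
    [HasShift T ℤ] [∀ n : ℤ, (shiftFunctor T n).Additive] [Pretriangulated T]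
    [HasCoproducts.{v} T] (S : Set T) : Prop :=
  (∀ ⦃X Y : T⦄, (X ≅ Y) → X ∈ S → Y ∈ S) ∧
  (∀ X ∈ S, ∀ n : ℤ, X⟦n⟧ ∈ S) ∧
  (∀ (Tr : Triangle T), Tr ∈ (distTriang T) → Tr.obj₁ ∈ S → Tr.obj₂ ∈ S → Tr.obj₃ ∈ S) ∧
  (∀ ⦃ι : Type v⦄ (X : ι → T), (∀ i, X i ∈ S) → (∐ X) ∈ S)

lemma postcomp_bijective_of_iso {T : Type u} [Category.{v} T] {L0 X A B : T} (f : L0 ⟶ X)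
    (e : A ≅ B) (hA : Function.Bijective (fun u : A ⟶ L0 => u ≫ f)) :
    Function.Bijective (fun u : B ⟶ L0 => u ≫ f) := by
  have h : (fun u : B ⟶ L0 => u ≫ f) =
      (e.homCongr (Iso.refl X)) ∘ (fun u : A ⟶ L0 => u ≫ f) ∘ (e.homCongr (Iso.refl L0)).symm := by
    funext u
    simp [Iso.homCongr_apply]
  rw [h]
  exact (Equiv.bijective _).comp (hA.comp (Equiv.bijective _))

lemma postcomp_injective_iff {T : Type u} [Category.{v} T] [Preadditive T] {L0 X : T}
    (f : L0 ⟶ X) (A : T) :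
    Function.Injective (fun u : A ⟶ L0 => u ≫ f) ↔ ∀ u : A ⟶ L0, u ≫ f = 0 → u = 0 :=
  injective_iff_map_eq_zero (Preadditive.rightComp A f)

lemma postcomp_bijective_sigma {T : Type u} [Category.{v} T] [HasCoproducts.{w} T] {L0 X : T}
    (f : L0 ⟶ X) {ι : Type w} (Y : ι → T)
    (hY : ∀ i, Function.Bijective (fun u : Y i ⟶ L0 => u ≫ f)) :
    Function.Bijective (fun u : ∐ Y ⟶ L0 => u ≫ f) := by
  constructor
  · intro u v huv
    refine Sigma.hom_ext _ _ fun i => (hY i).1 ?_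
    simpa only [assoc] using congrArg (Sigma.ι Y i ≫ ·) huv
  · intro w
    choose u hu using fun i => (hY i).2 (Sigma.ι Y i ≫ w)
    exact ⟨Sigma.desc u, Sigma.hom_ext _ _ fun i => by rw [← assoc, colimit.ι_desc]; exact hu i⟩

section Triangle

variable {T : Type u} [Category.{v} T] [Preadditive T] [HasZeroObject T]
    [HasShift T ℤ] [∀ n : ℤ, (shiftFunctor T n).Additive] [Pretriangulated T]
    {L0 X : T} (f : L0 ⟶ X) (Tr : Triangle T) (hTr : Tr ∈ distTriang T)
include hTr

lemma postcomp_injective_of_distTriang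
    (h₂ : Function.Injective (fun u : Tr.obj₂ ⟶ L0 => u ≫ f))
    (h₁' : Function.Injective (fun u : Tr.obj₁⟦(1 : ℤ)⟧ ⟶ L0 => u ≫ f))
    (h₂' : Function.Surjective (fun u : Tr.obj₂⟦(1 : ℤ)⟧ ⟶ L0 => u ≫ f)) :
    Function.Injective (fun u : Tr.obj₃ ⟶ L0 => u ≫ f) := by
  rw [postcomp_injective_iff] at h₂ ⊢
  intro u hu
  obtain ⟨s, rfl⟩ := Triangle.yoneda_exact₃ Tr hTr u (h₂ _ (by rw [assoc, hu, comp_zero]))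
  obtain ⟨t, ht⟩ := Triangle.yoneda_exact₃ Tr.rotate (rot_of_distTriang Tr hTr) (s ≫ f)
    ((assoc _ _ _).symm.trans hu)
  obtain ⟨t', rfl⟩ := h₂' t
  have hs : s = (-Tr.mor₁⟦(1 : ℤ)⟧') ≫ t' := h₁' (ht.trans (assoc _ _ _).symm)
  rw [hs, ← assoc, Preadditive.comp_neg, comp_distTriang_mor_zero₃₁ Tr hTr, neg_zero, zero_comp]

lemma postcomp_surjective_of_distTriang
    (h₁ : Function.Injective (fun u : Tr.obj₁ ⟶ L0 => u ≫ f))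
    (h₂ : Function.Surjective (fun u : Tr.obj₂ ⟶ L0 => u ≫ f))
    (h₁' : Function.Surjective (fun u : Tr.obj₁⟦(1 : ℤ)⟧ ⟶ L0 => u ≫ f)) :
    Function.Surjective (fun u : Tr.obj₃ ⟶ L0 => u ≫ f) := by
  rw [postcomp_injective_iff] at h₁
  intro w
  obtain ⟨v, hv⟩ := h₂ (Tr.mor₂ ≫ w)
  simp only at hv
  have hv₁ : Tr.mor₁ ≫ v = 0 := h₁ _ (by
    rw [assoc, hv, ← assoc, comp_distTriang_mor_zero₁₂ Tr hTr, zero_comp])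
  obtain ⟨u, hu⟩ := Triangle.yoneda_exact₂ Tr hTr v hv₁
  have hd : Tr.mor₂ ≫ (w - u ≫ f) = 0 := by
    rw [Preadditive.comp_sub, ← assoc, ← hu, hv, sub_self]
  obtain ⟨s, hs⟩ := Triangle.yoneda_exact₃ Tr hTr _ hd
  obtain ⟨s', hs'⟩ := h₁' s
  refine ⟨u + Tr.mor₃ ≫ s', ?_⟩
  simp only [Preadditive.add_comp, assoc] at hs' ⊢
  rw [hs', ← hs, add_sub_cancel]

end Triangle

variable {T : Type u} [Category.{v} T] [Preadditive T] [HasZeroObject T]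
    [HasShift T ℤ] [∀ n : ℤ, (shiftFunctor T n).Additive] [Pretriangulated T]
    [HasCoproducts.{v} T]

lemma isLocalizingClass_setOf_postcomp_bijective_shift {L0 X : T} (f : L0 ⟶ X) :
    IsLocalizingClass T {A | ∀ n : ℤ, Function.Bijective (fun u : A⟦n⟧ ⟶ L0 => u ≫ f)} := by
  refine ⟨?_, ?_, ?_, ?_⟩
  · intro A B e hA n
    exact postcomp_bijective_of_iso f ((shiftFunctor T n).mapIso e) (hA n)
  · intro A hA n m
    exact postcomp_bijective_of_iso f ((shiftFunctorAdd T n m).app A) (hA (n + m))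
  · intro Tr hTr h₁ h₂ n
    have shift_succ : ∀ {A : T}, (∀ n : ℤ, Function.Bijective (fun u : A⟦n⟧ ⟶ L0 => u ≫ f)) →
        Function.Bijective (fun u : A⟦n⟧⟦(1 : ℤ)⟧ ⟶ L0 => u ≫ f) := fun {A} hA =>
      postcomp_bijective_of_iso f ((shiftFunctorAdd T n 1).app A) (hA (n + 1))
    have hTrn := Triangle.shift_distinguished Tr hTr n
    exact ⟨postcomp_injective_of_distTriang f _ hTrn (h₂ n).1 (shift_succ h₁).1 (shift_succ h₂).2,
      postcomp_surjective_of_distTriang f _ hTrn (h₁ n).1 (h₂ n).2 (shift_succ h₁).2⟩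
  · intro ι Y hY n
    exact postcomp_bijective_of_iso f (PreservesCoproduct.iso (shiftFunctor T n) Y).symm
      (postcomp_bijective_sigma f _ fun i => hY i n)

/-- Let `S` be the smallest localizing subcategory of `T` containing a class
`𝓡` of objects (closed under shifts).  If `L0 ∈ S` and `f : L0 ⟶ X` is such that
composition with `f` induces an isomorphism `Hom(R, L0) ≅ Hom(R, X)` for all `R ∈ 𝓡`,
then composition with `f` induces an isomorphism `Hom(S', L0) ≅ Hom(S', X)` for every
object `S' ∈ S`. -/
theorem stmt2 {T : Type u} [Category.{v} T] [Preadditive T] [HasZeroObject T]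
    [HasShift T ℤ] [∀ n : ℤ, (shiftFunctor T n).Additive] [Pretriangulated T]
    [HasCoproducts.{v} T]
    (𝓡 S : Set T)
    (hR_shift : ∀ R ∈ 𝓡, ∀ n : ℤ, R⟦n⟧ ∈ 𝓡)
    (hS : IsLocalizingClass T S)
    (hRS : 𝓡 ⊆ S)
    (hmin : ∀ S' : Set T, IsLocalizingClass T S' → 𝓡 ⊆ S' → S ⊆ S')
    (L0 X : T) (hL0 : L0 ∈ S) (f : L0 ⟶ X)
    (hiso : ∀ R ∈ 𝓡, Function.Bijective (fun u : R ⟶ L0 => u ≫ f)) :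
    ∀ S' ∈ S, Function.Bijective (fun u : S' ⟶ L0 => u ≫ f) := by
  intro A hA
  have hR : 𝓡 ⊆ {A | ∀ n : ℤ, Function.Bijective (fun u : A⟦n⟧ ⟶ L0 => u ≫ f)} :=
    fun R hR n => hiso _ (hR_shift R hR n)
  have hA_shifts := hmin _ (isLocalizingClass_setOf_postcomp_bijective_shift f) hR hA
  exact postcomp_bijective_of_iso f ((shiftFunctorZero T ℤ).app A) (hA_shifts 0)
end

section
/- With the hypotheses and construction of the main theorem (X of finite 𝓡-dimension, L_0 the homotopy approximation), the map Hom_T(R, L_0) → Hom_T(R, X) induced by the canonical morphism L_0 → X is surjective for every R ∈ 𝓡. -/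
/-!
A morphism `Q R' ⟶ Q X` lifts along the full functor `Q` to `E`, factors there through the
`𝓡`-precover `R 0 ⟶ X`, and the triangle `g 0 ≫ σ 0 = Q (p 0)` turns this into a factorization
through `L 0`. When `d = 0` the comparison map `σ 0` is an isomorphism.
-/

open CategoryTheory Category Limits Pretriangulated

namespace CategoryTheory

lemma surjective_comp_of_isSplitEpi {C : Type*} [Category C] {X Y Z : C} (f : Y ⟶ Z)
    [IsSplitEpi f] : Function.Surjective (fun u : X ⟶ Y => u ≫ f) :=
  fun v => ⟨v ≫ section_ f, by simp⟩

lemma Functor.surjective_comp_of_fac_precover {E T : Type*} [Category E] [Category T]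
    (Q : E ⥤ T) [Q.Full] {R' P K : E} {L : T} (p : P ⟶ K)
    (hp : ∀ f : R' ⟶ K, ∃ g : R' ⟶ P, g ≫ p = f) (g : Q.obj P ⟶ L) (σ : L ⟶ Q.obj K)
    (hfac : g ≫ σ = Q.map p) : Function.Surjective (fun u : Q.obj R' ⟶ L => u ≫ σ) := by
  intro f
  obtain ⟨f', rfl⟩ := Q.map_surjective f
  obtain ⟨g', rfl⟩ := hp f'
  exact ⟨Q.map g' ≫ g, by simp [hfac]⟩

end CategoryTheory

/-- With the hypotheses and construction of the main theorem: Let `E` be a Frobenius category with stable (triangulated)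
category `T`, presented by the full additive quotient functor `Q : E ⥤ T` which kills
exactly the maps factoring through the projective-injective objects `Inj`.  Let `𝓡` be a
precovering class in `E`, closed under shifts in `T` and under injective hulls.  Let `X`
have `𝓡`-dimension `d`, with `𝓡`-resolution given by precovers `p i : R i ⟶ K i` and
kernels `k i : K (i+1) ⟶ R i` (where `K 0 = X` and `K d ∈ 𝓡`), and let `L 0` be the
object of `T` obtained by the iterated cone construction (encoded by the distinguished
triangles `L (i+1) → Q(R i) → L i` and the comparison maps `σ i : L i ⟶ Q(K i)`).
STATEMENT 7: the natural map `Hom_T(Q R', L 0) → Hom_T(Q R', Q X)` induced by the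
canonical morphism `L 0 ⟶ Q X` is surjective for every `R' ∈ 𝓡`. -/
theorem stmt7 {E : Type*} [Category E] [Preadditive E]
    {T : Type*} [Category T] [Preadditive T] [HasZeroObject T] [HasShift T ℤ]
    [∀ n : ℤ, (shiftFunctor T n).Additive] [Pretriangulated T]
    (Q : E ⥤ T) [Q.Full] [Q.Additive]
    (Inj : Set E)
    -- a map is zero in the stable category `T` iff it factors through an injective in `E`
    (hzero : ∀ {A B : E} (f : A ⟶ B),
      Q.map f = 0 ↔ ∃ (I : E) (_ : I ∈ Inj) (u : A ⟶ I) (v : I ⟶ B), u ≫ v = f)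
    (𝓡 : Set E)
    -- (i) `𝓡` is a precovering class in `E`
    (hpre : ∀ Y : E, ∃ (RY : E) (_ : RY ∈ 𝓡) (rY : RY ⟶ Y),
      ∀ R' ∈ 𝓡, ∀ f : R' ⟶ Y, ∃ g : R' ⟶ RY, g ≫ rY = f)
    -- (ii) `𝓡` is closed under shifts in `T`
    (hshift : ∀ R' ∈ 𝓡, ∀ n : ℤ, ∃ R'' ∈ 𝓡, Nonempty (Q.obj R'' ≅ (Q.obj R')⟦n⟧))
    -- (iii) `𝓡` is closed under injective hulls
    (hhull : ∀ R' ∈ 𝓡, ∃ (I : E) (_ : I ∈ Inj) (_ : I ∈ 𝓡) (ι : R' ⟶ I), Mono ι)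
    -- the `𝓡`-resolution of `X`, of length `d`
    (X : E) (d : ℕ) (K : ℕ → E) (hK0 : K 0 = X)
    (R : ℕ → E) (hRmem : ∀ i, R i ∈ 𝓡)
    (p : ∀ i, R i ⟶ K i)
    (hp : ∀ i, ∀ R' ∈ 𝓡, ∀ f : R' ⟶ K i, ∃ g : R' ⟶ R i, g ≫ p i = f)
    (k : ∀ i, K (i + 1) ⟶ R i)
    (hk : ∀ i, k i ≫ p i = 0)
    (hker : ∀ i, ∀ ⦃Z : E⦄ (u : Z ⟶ R i), u ≫ p i = 0 → ∃! v : Z ⟶ K (i + 1), v ≫ k i = u)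
    -- `X` has `𝓡`-dimension exactly `d`
    (hKd : K d ∈ 𝓡) (hmin : ∀ i < d, K i ∉ 𝓡)
    -- the homotopy approximation `L` with comparison maps `σ`
    (L : ℕ → T) (hLd : L d = Q.obj (K d))
    (σ : ∀ i, L i ⟶ Q.obj (K i)) (hσd : σ d = eqToHom (by rw [hLd]))
    (g : ∀ i, Q.obj (R i) ⟶ L i) (h : ∀ i, L i ⟶ (L (i + 1))⟦(1 : ℤ)⟧)
    (hdist : ∀ i < d, Triangle.mk (σ (i + 1) ≫ Q.map (k i)) (g i) (h i) ∈ (distTriang T))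
    (hcomm : ∀ i < d, g i ≫ σ i = Q.map (p i)) :
    ∀ R' ∈ 𝓡,
      Function.Surjective
        (fun u : Q.obj R' ⟶ L 0 => u ≫ σ 0 ≫ eqToHom (by rw [hK0] : Q.obj (K 0) = Q.obj X)) := by
  intro R' hR'
  have hσ : Function.Surjective (fun u : Q.obj R' ⟶ L 0 => u ≫ σ 0) := by
    rcases Nat.eq_zero_or_pos d with rfl | hd
    · rw [hσd]
      exact surjective_comp_of_isSplitEpi _
    · exact Q.surjective_comp_of_fac_precover (p 0) (hp 0 R' hR') (g 0) (σ 0) (hcomm 0 hd)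
  have hcomp : (fun u : Q.obj R' ⟶ L 0 => u ≫ σ 0 ≫ eqToHom (by rw [hK0])) =
      (fun v => v ≫ eqToHom (by rw [hK0])) ∘ (fun u => u ≫ σ 0) := by
    funext u
    simp
  rw [hcomp]
  exact (surjective_comp_of_isSplitEpi _).comp hσ
end
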